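/- For k even, k ≥ 2, summing over all paths γ in Γ_k (closed ±1-step paths of length k with maximum level 0), the total (negative) signed area ∑_{γ∈Γ_k} ∑_{i<0} i·l_i(γ) equals −k·2^{k−1}, where l_i(γ) is the number of crossings of the path γ with the horizontal line y = i + 1/2. -/

import Mathlib

/-- `γ` is a closed ±1-step path of length `k` whose maximum level is `0`. -/
def IsGammaPath (k : ℕ) (γ : Fin (k + 1) → ℤ) : Prop :=
  γ 0 = γ (Fin.last k) ∧
  (∀ u : Fin k, |γ u.succ - γ u.castSucc| = 1) ∧
  (∀ u, γ u ≤ 0) ∧ (∃ u, γ u = 0)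

/-- Number of crossings of `γ` with the horizontal line `y = i + 1/2`, i.e. the
number of steps `u` with `{γ u, γ (u+1)} = {i, i+1}`. -/
noncomputable def crossCount (k : ℕ) (i : ℤ) (γ : Fin (k + 1) → ℤ) : ℕ :=
  Nat.card {u : Fin k | ({γ u.castSucc, γ u.succ} : Set ℤ) = {i, i + 1}}

/-!
Record a path of `Γ_k` by its steps `ε : Fin k → Bool`: it is the height function of a
walk returning to `0`, shifted down by the walk's maximum `M ε`. A unit step crosses
`y = i + 1/2` exactly when its lower end is `i`, so the inner sum is the sum of the lower
ends of the steps, and twice it is `∑ u, (h u + h (u + 1)) - k (2 M ε + 1)`. Over all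
balanced walks the heights cancel under the flip `ε ↦ !ε`, so it remains to show
`∑ ε, (2 M ε + 1) = 2 ^ k`. By the reflection principle the balanced walks with `M ε ≥ |m|`
are as many as the walks ending at `2 m`; counting pairs `(ε, m)` with `|m| ≤ M ε` both ways
gives the number of walks with even endpoint, which is `2 ^ k` for even `k`.
-/

namespace GammaPath

open Finset

/-- `true` is an up-step, `false` a down-step. -/
def stepValue (b : Bool) : ℤ := bif b then 1 else -1

lemma stepValue_not (b : Bool) : stepValue (!b) = -stepValue b := by cases b <;> rfl

lemma abs_stepValue (b : Bool) : |stepValue b| = 1 := by cases b <;> simp [stepValue]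

lemma stepValue_injective : Function.Injective stepValue := by
  intro a b h; cases a <;> cases b <;> simp_all [stepValue]

section Height

variable {k : ℕ} (ε : Fin k → Bool)

/-- Constant after time `k`. -/
def height : ℕ → ℤ
  | 0 => 0
  | j + 1 => height j + if h : j < k then stepValue (ε ⟨j, h⟩) else 0

@[simp] lemma height_zero : height ε 0 = 0 := rfl

lemma height_succ (u : Fin k) : height ε (u + 1) = height ε u + stepValue (ε u) := by
  simp [height, u.isLt]

lemma abs_height_succ_sub_le (j : ℕ) : |height ε (j + 1) - height ε j| ≤ 1 := by
  simp only [height, add_sub_cancel_left]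
  split
  · exact (abs_stepValue _).le
  · simp

lemma abs_height_sub_le {a b : ℕ} (hab : a ≤ b) : |height ε b - height ε a| ≤ b - a := by
  induction b, hab using Nat.le_induction with
  | base => simp
  | succ n _ ih =>
    have := abs_height_succ_sub_le ε n
    calc |height ε (n + 1) - height ε a|
        ≤ |height ε (n + 1) - height ε n| + |height ε n - height ε a| := abs_sub_le _ _ _
      _ ≤ ((n + 1 : ℕ) : ℤ) - a := by push_cast; linarith

lemma abs_height_le (j : ℕ) : |height ε j| ≤ j := by
  simpa using abs_height_sub_le ε (Nat.zero_le j)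

lemma even_height_add {j : ℕ} (hj : j ≤ k) : Even (height ε j + j) := by
  induction j with
  | zero => simp
  | succ n ih =>
    have h : height ε (n + 1) = height ε n + stepValue (ε ⟨n, hj⟩) := height_succ ε ⟨n, hj⟩
    obtain ⟨c, hc⟩ := ih (by omega)
    rcases (abs_eq zero_le_one).1 (abs_stepValue (ε ⟨n, hj⟩)) with hs | hs
    · exact ⟨c + 1, by push_cast; omega⟩
    · exact ⟨c, by push_cast; omega⟩

lemma exists_height_eq {m : ℤ} (hm : 0 ≤ m) {j : ℕ} (hj : m ≤ height ε j) :
    ∃ t ≤ j, height ε t = m := by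
  induction j with
  | zero => exact ⟨0, le_rfl, le_antisymm hm hj⟩
  | succ n ih =>
    rcases le_or_gt m (height ε n) with h | h
    · obtain ⟨t, ht, h⟩ := ih h
      exact ⟨t, by omega, h⟩
    · have := abs_le.1 (abs_height_succ_sub_le ε n)
      exact ⟨n + 1, le_rfl, by omega⟩

lemma height_not (j : ℕ) : height (fun u => !ε u) j = -height ε j := by
  induction j with
  | zero => simp
  | succ n ih =>
    simp only [height, ih]
    split <;> simp [stepValue_not]; ring

def maxHeight : ℤ := (range (k + 1)).sup' nonempty_range_add_one (height ε)

lemma height_le_maxHeight {j : ℕ} (hj : j ≤ k) : height ε j ≤ maxHeight ε :=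
  le_sup' _ (mem_range_succ_iff.2 hj)

lemma exists_height_eq_maxHeight : ∃ j ≤ k, height ε j = maxHeight ε := by
  obtain ⟨j, hj, h⟩ := exists_mem_eq_sup' nonempty_range_add_one (height ε)
  exact ⟨j, mem_range_succ_iff.1 hj, h.symm⟩

lemma maxHeight_nonneg : 0 ≤ maxHeight ε := height_le_maxHeight ε (Nat.zero_le k)

lemma maxHeight_le : maxHeight ε ≤ k := by
  obtain ⟨j, hj, h⟩ := exists_height_eq_maxHeight ε
  have := (abs_le.1 (abs_height_le ε j)).2
  omega

end Height

section Reflection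

variable {k : ℕ}

def reflectAfter (t : ℕ) (ε : Fin k → Bool) : Fin k → Bool :=
  fun u => if (u : ℕ) < t then ε u else !ε u

lemma reflectAfter_reflectAfter (t : ℕ) (ε : Fin k → Bool) :
    reflectAfter t (reflectAfter t ε) = ε := by
  funext u
  simp only [reflectAfter]
  split <;> simp

lemma height_reflectAfter_of_le (t : ℕ) (ε : Fin k → Bool) {j : ℕ} (hj : j ≤ t) :
    height (reflectAfter t ε) j = height ε j := by
  induction j with
  | zero => rfl
  | succ n ih =>
    simp only [height, ih (by omega), reflectAfter, show n < t by omega, if_true]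

lemma height_reflectAfter_of_ge (t : ℕ) (ε : Fin k → Bool) {j : ℕ} (hj : t ≤ j) :
    height (reflectAfter t ε) j = 2 * height ε t - height ε j := by
  induction j, hj using Nat.le_induction with
  | base => rw [height_reflectAfter_of_le t ε le_rfl]; ring
  | succ n hn ih =>
    simp only [height, ih, reflectAfter, show ¬ n < t by omega, if_false]
    split <;> simp [stepValue_not]; ring

/-- Junk value `0` if the walk never reaches `m`. -/
noncomputable def hitTime (m : ℤ) (ε : Fin k → Bool) : ℕ := sInf {j | height ε j = m}

lemma height_hitTime_and_hitTime_le {m : ℤ} {ε : Fin k → Bool} {j : ℕ}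
    (h : ∃ t ≤ j, height ε t = m) : height ε (hitTime m ε) = m ∧ hitTime m ε ≤ j := by
  obtain ⟨t, htj, ht⟩ := h
  exact ⟨Nat.sInf_mem (s := {j | height ε j = m}) ⟨t, ht⟩, (Nat.sInf_le ht).trans htj⟩

noncomputable def reflectAt (m : ℤ) (ε : Fin k → Bool) : Fin k → Bool :=
  reflectAfter (hitTime m ε) ε

lemma hitTime_reflectAt {m : ℤ} {ε : Fin k → Bool} (h : ∃ j, height ε j = m) :
    hitTime m (reflectAt m ε) = hitTime m ε := by
  have hagree : ∀ j ≤ hitTime m ε, height (reflectAt m ε) j = height ε j :=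
    fun j hj => height_reflectAfter_of_le _ ε hj
  have hhit : height ε (hitTime m ε) = m := Nat.sInf_mem h
  refine le_antisymm (Nat.sInf_le ((hagree _ le_rfl).trans hhit)) ?_
  refine le_csInf ⟨_, (hagree _ le_rfl).trans hhit⟩ fun j hj => ?_
  by_contra! hlt
  exact Nat.notMem_of_lt_sInf hlt ((hagree j hlt.le).symm.trans hj)

lemma reflectAt_reflectAt {m : ℤ} {ε : Fin k → Bool} (h : ∃ j, height ε j = m) :
    reflectAt m (reflectAt m ε) = ε := by
  rw [reflectAt, hitTime_reflectAt h]
  exact reflectAfter_reflectAfter _ ε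

end Reflection

section Counting

variable (k : ℕ)

def balanced : Finset (Fin k → Bool) := {ε | height ε k = 0}

def endCount (s : ℤ) : ℕ := #{ε : Fin k → Bool | height ε k = s}

lemma endCount_neg (s : ℤ) : endCount k (-s) = endCount k s := by
  refine card_nbij' (fun ε u => !ε u) (fun ε u => !ε u) ?_ ?_ ?_ ?_ <;>
    intro ε hε <;> simp_all [height_not]

variable {k}

/-- Reflection principle: `reflectAt m` exchanges the balanced walks reaching `m` with the
walks ending at `2 * m`. -/
lemma card_filter_le_maxHeight {m : ℤ} (hm : 0 ≤ m) :
    #{ε ∈ balanced k | m ≤ maxHeight ε} = endCount k (2 * m) := by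
  have hreachBalanced : ∀ ε ∈ {ε ∈ balanced k | m ≤ maxHeight ε}, ∃ t ≤ k, height ε t = m := by
    intro ε hε
    simp only [balanced, mem_filter, mem_univ, true_and] at hε
    obtain ⟨j, hj, hmax⟩ := exists_height_eq_maxHeight ε
    obtain ⟨t, ht, h⟩ := exists_height_eq ε hm (hmax ▸ hε.2)
    exact ⟨t, ht.trans hj, h⟩
  have hreachEnd : ∀ δ ∈ ({δ | height δ k = 2 * m} : Finset (Fin k → Bool)),
      ∃ t ≤ k, height δ t = m := by
    intro δ hδ
    simp only [mem_filter, mem_univ, true_and] at hδ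
    exact exists_height_eq δ hm (by omega)
  refine card_bij' (fun ε _ => reflectAt m ε) (fun δ _ => reflectAt m δ) ?_ ?_ ?_ ?_
  · intro ε hε
    obtain ⟨hhit, hle⟩ := height_hitTime_and_hitTime_le (hreachBalanced ε hε)
    simp only [balanced, mem_filter, mem_univ, true_and] at hε ⊢
    rw [reflectAt, height_reflectAfter_of_ge _ _ hle, hhit, hε.1, sub_zero]
  · intro δ hδ
    obtain ⟨hhit, hle⟩ := height_hitTime_and_hitTime_le (hreachEnd δ hδ)
    simp only [balanced, mem_filter, mem_univ, true_and] at hδ ⊢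
    refine ⟨by rw [reflectAt, height_reflectAfter_of_ge _ _ hle, hhit, hδ, sub_self], ?_⟩
    calc m = height (reflectAt m δ) (hitTime m δ) := by
          rw [reflectAt, height_reflectAfter_of_le _ _ le_rfl, hhit]
      _ ≤ maxHeight (reflectAt m δ) := height_le_maxHeight _ hle
  · intro ε hε
    obtain ⟨t, -, ht⟩ := hreachBalanced ε hε
    exact reflectAt_reflectAt ⟨t, ht⟩
  · intro δ hδ
    obtain ⟨t, -, ht⟩ := hreachEnd δ hδ
    exact reflectAt_reflectAt ⟨t, ht⟩

lemma card_filter_abs_le_maxHeight (m : ℤ) :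
    #{ε ∈ balanced k | |m| ≤ maxHeight ε} = endCount k (2 * m) := by
  rcases le_total 0 m with hm | hm
  · rw [abs_of_nonneg hm, card_filter_le_maxHeight hm]
  · rw [abs_of_nonpos hm, card_filter_le_maxHeight (neg_nonneg.2 hm), ← endCount_neg,
      mul_neg, neg_neg]

lemma sum_endCount_two_mul (hk : Even k) :
    ∑ m ∈ Icc (-k : ℤ) k, endCount k (2 * m) = 2 ^ k := by
  have heven : ∀ ε : Fin k → Bool, Even (height ε k) := fun ε => by
    simpa [Int.even_add, hk] using even_height_add ε le_rfl
  have hmaps : ∀ ε ∈ (univ : Finset (Fin k → Bool)), height ε k / 2 ∈ Icc (-k : ℤ) k := by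
    intro ε _
    have := abs_le.1 (abs_height_le ε k)
    simp only [mem_Icc]
    omega
  have hfiber : ∀ m : ℤ, {ε ∈ (univ : Finset (Fin k → Bool)) | height ε k / 2 = m}
      = ({ε | height ε k = 2 * m} : Finset (Fin k → Bool)) := by
    intro m
    refine filter_congr fun ε _ => ?_
    obtain ⟨c, hc⟩ := heven ε
    omega
  simp_rw [endCount, ← hfiber]
  rw [← card_eq_sum_card_fiberwise hmaps]
  simp

lemma sum_two_mul_maxHeight_add_one (hk : Even k) :
    ∑ ε ∈ balanced k, (2 * maxHeight ε + 1) = 2 ^ k := by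
  have hcount : ∀ ε : Fin k → Bool,
      (#((Icc (-k : ℤ) k).bipartiteAbove (fun ε m => |m| ≤ maxHeight ε) ε) : ℤ)
        = 2 * maxHeight ε + 1 := by
    intro ε
    have h0 := maxHeight_nonneg ε
    have hle := maxHeight_le ε
    have : (Icc (-k : ℤ) k).bipartiteAbove (fun ε m => |m| ≤ maxHeight ε) ε
        = Icc (-maxHeight ε) (maxHeight ε) := by
      ext m
      simp only [bipartiteAbove, mem_filter, mem_Icc, abs_le]
      omega
    rw [this, Int.card_Icc_of_le _ _ (by omega)]
    ring
  simp_rw [← hcount]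
  rw [← Nat.cast_sum, sum_card_bipartiteAbove_eq_sum_card_bipartiteBelow]
  simp only [bipartiteBelow, card_filter_abs_le_maxHeight, sum_endCount_two_mul hk]
  push_cast; rfl

end Counting

section Paths

variable {k : ℕ}

def toPath (ε : Fin k → Bool) : Fin (k + 1) → ℤ := fun j => height ε j - maxHeight ε

lemma toPath_succ_sub_castSucc (ε : Fin k → Bool) (u : Fin k) :
    toPath ε u.succ - toPath ε u.castSucc = stepValue (ε u) := by
  simp only [toPath, Fin.val_succ, Fin.val_castSucc, height_succ]
  ring

lemma isGammaPath_toPath {ε : Fin k → Bool} (hε : ε ∈ balanced k) :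
    IsGammaPath k (toPath ε) := by
  simp only [balanced, mem_filter, mem_univ, true_and] at hε
  refine ⟨by simp [toPath, hε], fun u => ?_, fun j => ?_, ?_⟩
  · rw [toPath_succ_sub_castSucc]
    exact abs_stepValue _
  · have := height_le_maxHeight ε (Nat.lt_succ_iff.1 j.isLt)
    simp only [toPath]
    omega
  · obtain ⟨j, hj, h⟩ := exists_height_eq_maxHeight ε
    exact ⟨⟨j, by omega⟩, by simp [toPath, h]⟩

lemma toPath_injective : Function.Injective (toPath (k := k)) := by
  intro ε δ h
  funext u
  apply stepValue_injective
  rw [← toPath_succ_sub_castSucc, ← toPath_succ_sub_castSucc, h]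

def ofPath (γ : Fin (k + 1) → ℤ) (u : Fin k) : Bool := decide (γ u.castSucc < γ u.succ)

variable {γ : Fin (k + 1) → ℤ}

lemma stepValue_ofPath (hstep : ∀ u : Fin k, |γ u.succ - γ u.castSucc| = 1) (u : Fin k) :
    stepValue (ofPath γ u) = γ u.succ - γ u.castSucc := by
  rcases (abs_eq zero_le_one).1 (hstep u) with h | h
  · simp [ofPath, stepValue, h, show γ u.castSucc < γ u.succ by omega]
  · simp [ofPath, stepValue, h, show ¬ γ u.castSucc < γ u.succ by omega]

lemma height_ofPath (hstep : ∀ u : Fin k, |γ u.succ - γ u.castSucc| = 1) (j : Fin (k + 1)) :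
    height (ofPath γ) j = γ j - γ 0 := by
  induction j using Fin.induction with
  | zero => simp
  | succ u ih =>
    rw [Fin.val_succ, height_succ, ← Fin.val_castSucc, ih, stepValue_ofPath hstep]
    ring

lemma ofPath_mem_balanced_and_toPath_ofPath (hγ : IsGammaPath k γ) :
    ofPath γ ∈ balanced k ∧ toPath (ofPath γ) = γ := by
  obtain ⟨hclosed, hstep, hle, ⟨j₀, hj₀⟩⟩ := hγ
  have hheight := height_ofPath hstep
  have hmax : maxHeight (ofPath γ) = -γ 0 := by
    refine le_antisymm ?_ ?_
    · obtain ⟨j, hj, h⟩ := exists_height_eq_maxHeight (ofPath γ)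
      have hj' : height (ofPath γ) j = γ ⟨j, by omega⟩ - γ 0 := hheight ⟨j, by omega⟩
      have := hle ⟨j, by omega⟩
      omega
    · have := height_le_maxHeight (ofPath γ) (Nat.lt_succ_iff.1 j₀.isLt)
      rw [hheight, hj₀] at this
      omega
  refine ⟨?_, funext fun j => ?_⟩
  · simpa [balanced, hclosed] using hheight (Fin.last k)
  · rw [toPath, hheight, hmax]
    ring

lemma setOf_isGammaPath_eq_image :
    {γ : Fin (k + 1) → ℤ | IsGammaPath k γ} = (balanced k).image toPath := by
  ext γ
  simp only [Set.mem_ofPred_eq, coe_image, Set.mem_image, mem_coe]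
  constructor
  · intro hγ
    exact ⟨ofPath γ, ofPath_mem_balanced_and_toPath_ofPath hγ⟩
  · rintro ⟨ε, hε, rfl⟩
    exact isGammaPath_toPath hε

end Paths

section Area

variable {k : ℕ}

lemma pair_eq_pair_add_one_iff {a b i : ℤ} (h : |b - a| = 1) :
    ({a, b} : Set ℤ) = {i, i + 1} ↔ min a b = i := by
  rw [Set.pair_eq_pair_iff]
  rcases (abs_eq zero_le_one).1 h with h | h <;> omega

lemma two_mul_min_eq {a b : ℤ} (h : |b - a| = 1) : 2 * min a b = a + b - 1 := by
  rcases (abs_eq zero_le_one).1 h with h | h <;> omega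

variable {γ : Fin (k + 1) → ℤ}

lemma crossCount_eq_card (hstep : ∀ u : Fin k, |γ u.succ - γ u.castSucc| = 1) (i : ℤ) :
    crossCount k i γ = #{u : Fin k | min (γ u.castSucc) (γ u.succ) = i} := by
  simp [crossCount, pair_eq_pair_add_one_iff, hstep, Nat.card_eq_fintype_card,
    Fintype.card_subtype]

lemma finsum_mul_crossCount (hγ : IsGammaPath k γ) :
    ∑ᶠ i ∈ {i : ℤ | i < 0}, i * (crossCount k i γ : ℤ)
      = ∑ u : Fin k, min (γ u.castSucc) (γ u.succ) := by
  obtain ⟨-, hstep, hle, -⟩ := hγ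
  have hlow : ∀ u : Fin k, min (γ u.castSucc) (γ u.succ) < 0 := fun u => by
    have := hle u.castSucc
    have := hle u.succ
    have := (abs_eq zero_le_one).1 (hstep u)
    omega
  set low : Fin k → ℤ := fun u => min (γ u.castSucc) (γ u.succ)
  rw [finsum_mem_eq_sum_of_subset (t := univ.image low)]
  · refine (sum_congr rfl fun i _ => ?_).trans (sum_comp (s := univ) id low).symm
    simp [crossCount_eq_card hstep, mul_comm, low]
  · intro i ⟨_, hi⟩
    simpa [crossCount_eq_card hstep, low] using right_ne_zero_of_mul hi
  · intro i hi
    obtain ⟨u, -, rfl⟩ := mem_image.1 (mem_coe.1 hi)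
    exact hlow u

lemma two_mul_sum_min_toPath (ε : Fin k → Bool) :
    2 * ∑ u : Fin k, min (toPath ε u.castSucc) (toPath ε u.succ)
      = ∑ u : Fin k, (height ε u + height ε (u + 1)) - k * (2 * maxHeight ε + 1) := by
  have hterm : ∀ u : Fin k, 2 * min (toPath ε u.castSucc) (toPath ε u.succ)
      = height ε u + height ε (u + 1) - (2 * maxHeight ε + 1) := fun u => by
    rw [two_mul_min_eq (by rw [toPath_succ_sub_castSucc]; exact abs_stepValue _)]
    simp only [toPath, Fin.val_succ, Fin.val_castSucc]
    ring
  simp [mul_sum, hterm, sum_sub_distrib]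

lemma sum_height_balanced (j : ℕ) : ∑ ε ∈ balanced k, height ε j = 0 := by
  have hflip : ∑ ε ∈ balanced k, height ε j = ∑ ε ∈ balanced k, height (fun u => !ε u) j :=
    sum_nbij' (fun ε u => !ε u) (fun ε u => !ε u) (by simp [balanced, height_not])
      (by simp [balanced, height_not]) (by simp) (by simp) (by simp)
  simp only [height_not, sum_neg_distrib] at hflip
  linarith

end Area

end GammaPath

open GammaPath Finset in
theorem stmt6_general (k : ℕ) (hk : Even k) :
    ∑ᶠ γ ∈ {γ : Fin (k + 1) → ℤ | IsGammaPath k γ},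
        ∑ᶠ i ∈ {i : ℤ | i < 0}, i * (crossCount k i γ : ℤ)
      = -(k : ℤ) * 2 ^ (k - 1) := by
  rw [setOf_isGammaPath_eq_image, finsum_mem_coe_finset, sum_image toPath_injective.injOn,
    sum_congr rfl fun ε hε => finsum_mul_crossCount (isGammaPath_toPath hε)]
  have htwice : 2 * ∑ ε ∈ balanced k, ∑ u : Fin k, min (toPath ε u.castSucc) (toPath ε u.succ)
      = -(k : ℤ) * 2 ^ k := by
    rw [mul_sum, sum_congr rfl fun ε _ => two_mul_sum_min_toPath ε, sum_sub_distrib, sum_comm,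
      ← mul_sum, sum_two_mul_maxHeight_add_one hk]
    simp [sum_add_distrib, sum_height_balanced]
  have hpred : (2 : ℤ) * (-(k : ℤ) * 2 ^ (k - 1)) = -(k : ℤ) * 2 ^ k := by
    rcases k with _ | n
    · simp
    · rw [Nat.add_sub_cancel, pow_succ]
      ring
  exact mul_left_cancel₀ two_ne_zero (htwice.trans hpred.symm)

theorem stmt6 (k : ℕ) (hk : Even k) (h2 : 2 ≤ k) :
    ∑ᶠ γ ∈ {γ : Fin (k + 1) → ℤ | IsGammaPath k γ},
        ∑ᶠ i ∈ {i : ℤ | i < 0}, i * (crossCount k i γ : ℤ)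
      = -(k : ℤ) * 2 ^ (k - 1) :=
  stmt6_general k hk
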